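/- arXiv:2304.03908 — 8 statements merged into one kernel-verified Lean document; each statement's English description precedes it below -/
import Mathlib

section
/- Let (X,d) be a metric space, U ⊊ X a nonempty open set, λ > 1 and ε ∈ (0,1/2) with (λ-1)ε < 1, and let 𝔅 = {B_U(x_i,r_i)} be an ε-Whitney cover of U. If i ≠ j and B(x_i, λ r_i) ∩ B(x_j, λ r_j) ≠ ∅, then (1-(λ-1)ε)/(1+(λ+1)ε) · r_j ≤ r_i ≤ (1+(λ+1)ε)/(1-(λ-1)ε) · r_j. -/
/-- radii of intersecting dilated Whitney balls are comparable. -/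
theorem stmt2 {X : Type*} [MetricSpace X] (U : Set X) (hUopen : IsOpen U)
    (hUne : U.Nonempty) (hUproper : U ≠ Set.univ)
    (ε lam : ℝ) (hε : 0 < ε) (hε' : ε < 1/2) (hlam : 1 < lam)
    (hlamε : (lam - 1) * ε < 1)
    {I : Type*} (c : I → X) (ρ : I → ℝ)
    (hc : ∀ i, c i ∈ U)
    (hρ : ∀ i, ρ i = ε / (1 + ε) * Metric.infDist (c i) Uᶜ)
    (hdisj : Pairwise fun i j =>
      Disjoint (Metric.ball (c i) (ρ i) ∩ U) (Metric.ball (c j) (ρ j) ∩ U))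
    (hcover : U ⊆ ⋃ i, Metric.ball (c i) (2 * (1 + ε) * ρ i))
    (i j : I) (hij : i ≠ j)
    (hint : (Metric.ball (c i) (lam * ρ i) ∩ Metric.ball (c j) (lam * ρ j)).Nonempty) :
    (1 - (lam - 1)*ε) / (1 + (lam + 1)*ε) * ρ j ≤ ρ i ∧
    ρ i ≤ (1 + (lam + 1)*ε) / (1 - (lam - 1)*ε) * ρ j := by
  have hUc : Uᶜ.Nonempty := by rwa [Set.nonempty_compl]
  have h1ε : (0:ℝ) < 1 + ε := by linarith
  have hA : (0:ℝ) < 1 + (lam + 1) * ε := by nlinarith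
  have hB : (0:ℝ) < 1 - (lam - 1) * ε := by linarith
  obtain ⟨z, hzi, hzj⟩ := hint
  simp only [Metric.mem_ball] at hzi hzj
  have hd : dist (c i) (c j) < lam * ρ i + lam * ρ j := by
    calc dist (c i) (c j) ≤ dist z (c i) + dist z (c j) := dist_triangle_left _ _ _
    _ < lam * ρ i + lam * ρ j := by linarith
  have key : ∀ k l : I, dist (c k) (c l) < lam * ρ k + lam * ρ l →
      (1 - (lam - 1) * ε) * ρ l ≤ (1 + (lam + 1) * ε) * ρ k := by
    intro k l hkl
    have hlip : Metric.infDist (c l) Uᶜ ≤ Metric.infDist (c k) Uᶜ + dist (c l) (c k) :=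
      Metric.infDist_le_infDist_add_dist
    rw [dist_comm] at hlip
    have hρk := hρ k; have hρl := hρ l
    have ha : 0 ≤ Metric.infDist (c k) Uᶜ := Metric.infDist_nonneg
    have hb : 0 ≤ Metric.infDist (c l) Uᶜ := Metric.infDist_nonneg
    have hεpos : 0 < ε / (1 + ε) := div_pos hε h1ε
    rw [hρk, hρl] at hkl ⊢
    set a := Metric.infDist (c k) Uᶜ
    set b := Metric.infDist (c l) Uᶜ
    have h2 : b ≤ a + lam * (ε / (1 + ε) * a) + lam * (ε / (1 + ε) * b) := by linarith
    have h3 : b * (1 + ε) ≤ a * (1 + ε) + lam * ε * a + lam * ε * b := by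
      have := mul_le_mul_of_nonneg_right h2 (le_of_lt h1ε)
      field_simp at this
      nlinarith [this]
    have h4 : (1 - (lam - 1) * ε) * b ≤ (1 + (lam + 1) * ε) * a := by nlinarith
    calc (1 - (lam - 1) * ε) * (ε / (1 + ε) * b)
        = ε / (1 + ε) * ((1 - (lam - 1) * ε) * b) := by ring
      _ ≤ ε / (1 + ε) * ((1 + (lam + 1) * ε) * a) :=
          mul_le_mul_of_nonneg_left h4 (le_of_lt hεpos)
      _ = (1 + (lam + 1) * ε) * (ε / (1 + ε) * a) := by ring
  have k1 := key i j hd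
  have k2 := key j i (by rw [dist_comm]; linarith)
  constructor
  · rw [div_mul_eq_mul_div, div_le_iff₀ hA]; linarith [k2]
  · rw [div_mul_eq_mul_div, le_div_iff₀ hB]; linarith [k1]
end

section
/- Let (X,d) be a metric space, U ⊊ X open, ε ∈ (0,1/2), λ > 1 with (λ-1)ε < 1, and let {B_U(x_i,r_i)} be an ε-Whitney cover of U. If i ≠ j and B(x_i, λ r_i) ∩ B(x_j, λ r_j) ≠ ∅, then max(r_i, r_j) ≤ d(x_i, x_j) ≤ λ (1 + (1+(λ+1)ε)/(1-(λ-1)ε)) · min(r_i, r_j). -/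
/-- distance between centers of intersecting dilated Whitney balls. -/
theorem stmt3 {X : Type*} [MetricSpace X] (U : Set X) (hUopen : IsOpen U)
    (hUne : U.Nonempty) (hUproper : U ≠ Set.univ)
    (ε lam : ℝ) (hε : 0 < ε) (hε' : ε < 1/2) (hlam : 1 < lam)
    (hlamε : (lam - 1) * ε < 1)
    {I : Type*} (c : I → X) (ρ : I → ℝ)
    (hc : ∀ i, c i ∈ U)
    (hρ : ∀ i, ρ i = ε / (1 + ε) * Metric.infDist (c i) Uᶜ)
    (hdisj : Pairwise fun i j =>
      Disjoint (Metric.ball (c i) (ρ i) ∩ U) (Metric.ball (c j) (ρ j) ∩ U))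
    (hcover : U ⊆ ⋃ i, Metric.ball (c i) (2 * (1 + ε) * ρ i))
    (i j : I) (hij : i ≠ j)
    (hint : (Metric.ball (c i) (lam * ρ i) ∩ Metric.ball (c j) (lam * ρ j)).Nonempty) :
    max (ρ i) (ρ j) ≤ dist (c i) (c j) ∧
    dist (c i) (c j) ≤
      lam * (1 + (1 + (lam + 1)*ε) / (1 - (lam - 1)*ε)) * min (ρ i) (ρ j) := by
  have hUc : Uᶜ.Nonempty := Set.nonempty_compl.mpr hUproper
  have hδ : ∀ k, 0 < Metric.infDist (c k) Uᶜ := fun k =>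
    (hUopen.isClosed_compl.notMem_iff_infDist_pos hUc).1 (by simp [hc k])
  have hεε : 0 < ε / (1 + ε) := by positivity
  have hρpos : ∀ k, 0 < ρ k := fun k => by rw [hρ k]; exact mul_pos hεε (hδ k)
  -- lower bound
  have hd : ∀ k l, k ≠ l → ρ k ≤ dist (c k) (c l) := by
    intro k l hkl
    by_contra h
    push_neg at h
    have h1 : c l ∈ Metric.ball (c k) (ρ k) ∩ U :=
      ⟨by rwa [Metric.mem_ball, dist_comm], hc l⟩
    have h2 : c l ∈ Metric.ball (c l) (ρ l) ∩ U :=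
      ⟨Metric.mem_ball_self (hρpos l), hc l⟩
    exact Set.disjoint_left.1 (hdisj hkl) h1 h2
  have hlow : max (ρ i) (ρ j) ≤ dist (c i) (c j) := by
    refine max_le (hd i j hij) ?_
    rw [dist_comm]; exact hd j i hij.symm
  refine ⟨hlow, ?_⟩
  -- upper bound
  obtain ⟨z, hz1, hz2⟩ := hint
  rw [Metric.mem_ball] at hz1 hz2
  have hdle : dist (c i) (c j) ≤ lam * ρ i + lam * ρ j := by
    calc dist (c i) (c j) ≤ dist (c i) z + dist z (c j) := dist_triangle _ _ _
    _ ≤ lam * ρ i + lam * ρ j := by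
        rw [dist_comm (c i) z]; linarith
  have hden : 0 < 1 - (lam - 1) * ε := by linarith
  have hnum : 0 < 1 + (lam + 1) * ε := by nlinarith
  set K := (1 + (lam + 1) * ε) / (1 - (lam - 1) * ε) with hK
  have hKcomp : ∀ k l, dist (c k) (c l) ≤ lam * ρ k + lam * ρ l → ρ l ≤ K * ρ k := by
    intro k l hkl
    have h1 : Metric.infDist (c l) Uᶜ ≤ Metric.infDist (c k) Uᶜ + dist (c l) (c k) :=
      Metric.infDist_le_infDist_add_dist
    rw [dist_comm] at h1
    set a := Metric.infDist (c k) Uᶜ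
    set b := Metric.infDist (c l) Uᶜ
    have hb : b * (1 - (lam - 1) * ε) ≤ a * (1 + (lam + 1) * ε) := by
      have hρk := hρ k; have hρl := hρ l
      have h1ε : (0:ℝ) < 1 + ε := by linarith
      have h2 : b ≤ a + lam * (ε / (1 + ε) * a) + lam * (ε / (1 + ε) * b) := by
        rw [hρk, hρl] at hkl; linarith
      have h3 : b * (1 + ε) ≤ a * (1 + ε) + lam * ε * a + lam * ε * b := by
        have := mul_le_mul_of_nonneg_right h2 h1ε.le
        field_simp at this ⊢
        nlinarith [this]
      nlinarith
    have : b ≤ K * a := by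
      rw [hK, div_mul_eq_mul_div, le_div_iff₀ hden]
      nlinarith
    rw [hρ k, hρ l]
    calc ε / (1 + ε) * b ≤ ε / (1 + ε) * (K * a) := by
          exact mul_le_mul_of_nonneg_left this hεε.le
    _ = K * (ε / (1 + ε) * a) := by ring
  have hK1 : 1 ≤ K := by
    rw [hK, le_div_iff₀ hden]; nlinarith
  rcases le_total (ρ i) (ρ j) with h | h
  · have hji : ρ j ≤ K * ρ i := hKcomp i j hdle
    rw [min_eq_left h]
    calc dist (c i) (c j) ≤ lam * ρ i + lam * ρ j := hdle
    _ ≤ lam * ρ i + lam * (K * ρ i) := by nlinarith [hρpos i]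
    _ = lam * (1 + K) * ρ i := by ring
  · have hji : ρ i ≤ K * ρ j := hKcomp j i (by rwa [dist_comm, add_comm])
    rw [min_eq_right h]
    calc dist (c i) (c j) ≤ lam * ρ i + lam * ρ j := hdle
    _ ≤ lam * (K * ρ j) + lam * ρ j := by nlinarith [hρpos j]
    _ = lam * (1 + K) * ρ j := by ring
end

section
/- Let (X,d) be a doubling metric space, U ⊊ X open, ε ∈ (0,1/2), and {B_U(x_i,r_i) : i ∈ I} an ε-Whitney cover of U. Then there exists a constant C ≥ 1, depending only on ε and the doubling constant of (X,d), such that the enlarged balls satisfy the bounded overlap estimate ∑_{i ∈ I} 1_{B_U(x_i, r_i/ε)}(y) ≤ C for all y ∈ U. -/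
open Metric Set

/-- Iterated doubling: a ball of radius `R` is covered by `N^k` balls of radius `R/2^k`. -/
lemma doubling_iter {X : Type*} [MetricSpace X] (N : ℕ)
    (h : ∀ (x : X) (R : ℝ), ∃ s : Finset X,
      s.card ≤ N ∧ ball x R ⊆ ⋃ y ∈ s, ball y (R/2)) :
    ∀ (k : ℕ) (x : X) (R : ℝ), ∃ s : Finset X,
      s.card ≤ N^k ∧ ball x R ⊆ ⋃ y ∈ s, ball y (R/2^k) := by
  classical
  intro k
  induction k with
  | zero => intro x R; exact ⟨{x}, by simp, by simp⟩
  | succ k ih =>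
    intro x R
    obtain ⟨s, hs, hcov⟩ := ih x R
    choose t ht htcov using fun y : X => h y (R/2^k)
    refine ⟨s.biUnion t, ?_, ?_⟩
    · calc (s.biUnion t).card ≤ ∑ y ∈ s, (t y).card := Finset.card_biUnion_le
        _ ≤ ∑ _y ∈ s, N := Finset.sum_le_sum fun y _ => ht y
        _ = s.card * N := by rw [Finset.sum_const, smul_eq_mul]
        _ ≤ N^k * N := Nat.mul_le_mul_right _ hs
        _ = N^(k+1) := (pow_succ N k).symm
    · intro z hz
      obtain ⟨y, hy, hzy⟩ := mem_iUnion₂.1 (hcov hz)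
      obtain ⟨w, hw, hzw⟩ := mem_iUnion₂.1 (htcov y hzy)
      refine mem_iUnion₂.2 ⟨w, Finset.mem_biUnion.2 ⟨y, hy, hw⟩, ?_⟩
      rwa [pow_succ, ← div_div]

/-- bounded overlap of the `1/ε`-dilates of a Whitney cover in a
doubling metric space. -/
theorem stmt4 {X : Type*} [MetricSpace X]
    (N : ℕ)
    (hdoubling : ∀ (x : X) (R : ℝ), ∃ s : Finset X,
      s.card ≤ N ∧ Metric.ball x R ⊆ ⋃ y ∈ s, Metric.ball y (R/2))
    (U : Set X) (hUopen : IsOpen U) (hUne : U.Nonempty) (hUproper : U ≠ Set.univ)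
    (ε : ℝ) (hε : 0 < ε) (hε' : ε < 1/2)
    {I : Type*} (c : I → X) (ρ : I → ℝ)
    (hc : ∀ i, c i ∈ U)
    (hρ : ∀ i, ρ i = ε / (1 + ε) * Metric.infDist (c i) Uᶜ)
    (hdisj : Pairwise fun i j =>
      Disjoint (Metric.ball (c i) (ρ i) ∩ U) (Metric.ball (c j) (ρ j) ∩ U))
    (hcover : U ⊆ ⋃ i, Metric.ball (c i) (2 * (1 + ε) * ρ i)) :
    ∃ C : ℕ, 1 ≤ C ∧ ∀ y ∈ U,
      {i : I | y ∈ Metric.ball (c i) (ρ i / ε) ∩ U}.encard ≤ C := by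
  have hε1 : (0:ℝ) < 1 + ε := by linarith
  obtain ⟨x₀, hx₀⟩ := hUne
  -- N ≥ 1
  have hN : 1 ≤ N := by
    obtain ⟨s, hs, hcov⟩ := hdoubling x₀ 1
    obtain ⟨z, hz, -⟩ := mem_iUnion₂.1 (hcov (mem_ball_self one_pos))
    exact le_trans (Finset.card_pos.2 ⟨z, hz⟩) hs
  obtain ⟨k, hk⟩ := pow_unbounded_of_one_lt (5/ε^2) (by norm_num : (1:ℝ) < 2)
  refine ⟨N^k, Nat.one_le_pow _ _ hN, ?_⟩
  intro y hy
  have hUc : (Uᶜ).Nonempty := Set.nonempty_compl.2 hUproper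
  set δy := infDist y Uᶜ with hδydef
  have hδy : 0 < δy :=
    (hUopen.isClosed_compl.notMem_iff_infDist_pos hUc).1 (by simpa using hy)
  set r₀ : ℝ := ε * δy / (2 + ε) with hr₀def
  set R : ℝ := δy / ε with hRdef
  have hr₀pos : 0 < r₀ := by
    apply div_pos (mul_pos hε hδy); linarith
  have hRpos : 0 < R := div_pos hδy hε
  -- key bounds for members of the overlap set
  have key : ∀ i, y ∈ ball (c i) (ρ i / ε) ∩ U →
      r₀ ≤ ρ i ∧ dist (c i) y < R := by
    intro i hi
    have hd : dist y (c i) < ρ i / ε := hi.1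
    have hρi := hρ i
    set D := infDist (c i) Uᶜ with hDdef
    have hd' : dist y (c i) < D / (1 + ε) := by
      rw [hρi] at hd
      calc dist y (c i) < ε / (1 + ε) * D / ε := hd
        _ = D / (1 + ε) := by field_simp
    have h1 : D ≤ δy + dist y (c i) := by
      have := infDist_le_infDist_add_dist (x := c i) (y := y) (s := Uᶜ)
      rwa [dist_comm] at this
    have h2 : δy ≤ D + dist y (c i) := by
      exact infDist_le_infDist_add_dist (x := y) (y := c i) (s := Uᶜ)
    have ht : dist y (c i) * (1 + ε) < D := (lt_div_iff₀ hε1).1 hd'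
    constructor
    · -- r₀ ≤ ρ i
      have hDδ : δy * (1 + ε) ≤ D * (2 + ε) := by
        nlinarith [mul_le_mul_of_nonneg_right h2 hε1.le]
      rw [hρi, hr₀def, div_mul_eq_mul_div,
        div_le_div_iff₀ (by linarith : (0:ℝ) < 2 + ε) hε1]
      nlinarith [mul_le_mul_of_nonneg_left hDδ hε.le]
    · -- dist (c i) y < R
      have hρδ : ρ i ≤ δy := by
        have hDε : D * ε ≤ δy * (1 + ε) := by
          nlinarith [mul_le_mul_of_nonneg_right h1 hε1.le]
        rw [hρi, div_mul_eq_mul_div, div_le_iff₀ hε1]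
        nlinarith
      rw [dist_comm]
      calc dist y (c i) < ρ i / ε := hd
        _ ≤ δy / ε := by gcongr
        _ = R := rfl
  -- covering of ball y R by N^k balls of radius R/2^k
  obtain ⟨s, hscard, hscov⟩ := doubling_iter N hdoubling k y R
  set r : ℝ := R / 2^k with hrdef
  have h2k : (0:ℝ) < 2^k := by positivity
  have hrr₀ : 2 * r < r₀ := by
    have h5 : 5 < 2^k * ε^2 := (div_lt_iff₀ (by positivity)).1 hk
    have heq : 2 * (δy / ε / 2^k) = 2 * δy / (ε * 2^k) := by
      field_simp
    rw [hrdef, hRdef, hr₀def, heq,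
      div_lt_div_iff₀ (by positivity) (by linarith : (0:ℝ) < 2 + ε)]
    nlinarith [mul_lt_mul_of_pos_left h5 hδy]
  -- choose a covering center for each index
  classical
  set S := {i : I | y ∈ ball (c i) (ρ i / ε) ∩ U} with hSdef
  have hmem : ∀ i ∈ S, ∃ z, z ∈ s ∧ c i ∈ ball z r := by
    intro i hi
    have : c i ∈ ball y R := by
      rw [mem_ball]; exact (key i hi).2
    simpa using mem_iUnion₂.1 (hscov this)
  set f : I → X := fun i =>
    if h : ∃ z, z ∈ s ∧ c i ∈ ball z r then h.choose else y with hfdef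
  have hfspec : ∀ i ∈ S, f i ∈ s ∧ c i ∈ ball (f i) r := by
    intro i hi
    have h := hmem i hi
    simp only [hfdef, dif_pos h]
    exact h.choose_spec
  have hmaps : MapsTo f S (↑s : Set X) := fun i hi => (hfspec i hi).1
  have hinj : InjOn f S := by
    intro i hi j hj hfij
    by_contra hij
    have h1 := (hfspec i hi).2
    have h2 := (hfspec j hj).2
    rw [hfij] at h1
    have hdij : dist (c i) (c j) < r₀ := by
      calc dist (c i) (c j) ≤ dist (c i) (f j) + dist (f j) (c j) :=
            dist_triangle _ _ _
        _ < r + r := by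
            rw [dist_comm (f j) (c j)]
            exact add_lt_add h1 h2
        _ = 2 * r := by ring
        _ < r₀ := hrr₀
    have hρj := (key j hj).1
    have hρi := (key i hi).1
    have hci1 : c i ∈ ball (c i) (ρ i) ∩ U :=
      ⟨mem_ball_self (lt_of_lt_of_le hr₀pos hρi), hc i⟩
    have hci2 : c i ∈ ball (c j) (ρ j) ∩ U :=
      ⟨mem_ball.2 (lt_of_lt_of_le hdij hρj), hc i⟩
    exact Set.disjoint_left.1 (hdisj hij) hci1 hci2
  calc S.encard = (f '' S).encard := (hinj.encard_image).symm
    _ ≤ (↑s : Set X).encard := encard_mono (image_subset_iff.2 hmaps)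
    _ = (s.card : ℕ∞) := Set.encard_coe_eq_coe_finsetCard s
    _ ≤ ((N^k : ℕ) : ℕ∞) := by exact_mod_cast hscard
end

section
/- Let (X,d) be a metric space and let U ⊊ X be an A-uniform domain for some A ≥ 1. For any x ∈ closure(U) and r > 0 such that U \ B(x,r) ≠ ∅, there exists y ∈ U such that the ball B(y, r/(3A)) is contained in U ∩ B(x,r). -/
/-- `U` is an `A`-uniform domain in the metric space `X`. -/
def IsUniformDomain {X : Type*} [MetricSpace X] (A : ℝ) (U : Set X) : Prop :=
  U.Nonempty ∧ U ≠ Set.univ ∧ IsOpen U ∧ IsConnected U ∧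
  ∀ x ∈ U, ∀ y ∈ U, ∃ γ : ℝ → X,
    ContinuousOn γ (Set.Icc 0 1) ∧ γ 0 = x ∧ γ 1 = y ∧
    (∀ t ∈ Set.Icc (0:ℝ) 1, γ t ∈ U) ∧
    Metric.diam (γ '' Set.Icc 0 1) ≤ A * dist x y ∧
    ∀ t ∈ Set.Icc (0:ℝ) 1,
      A⁻¹ * min (dist x (γ t)) (dist y (γ t)) ≤ Metric.infDist (γ t) Uᶜ

/-- corkscrew condition for uniform domains. -/
theorem stmt7 {X : Type*} [MetricSpace X] (A : ℝ) (hA : 1 ≤ A)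
    (U : Set X) (hU : IsUniformDomain A U)
    (x : X) (hx : x ∈ closure U) (r : ℝ) (hr : 0 < r)
    (hne : (U \ Metric.ball x r).Nonempty) :
    ∃ y ∈ U, Metric.ball y (r / (3*A)) ⊆ U ∩ Metric.ball x r := by
  have hA0 : (0:ℝ) < A := lt_of_lt_of_le one_pos hA
  obtain ⟨-, -, -, -, hcurve⟩ := hU
  obtain ⟨z, hzU, hz⟩ := hne
  have hzr : r ≤ dist x z := by
    by_contra h
    exact hz (by simpa [Metric.mem_ball, dist_comm] using lt_of_not_ge h)
  -- pick x' ∈ U close to x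
  obtain ⟨x', hx'U, hx'd⟩ := Metric.mem_closure_iff.mp hx (r / 6) (by linarith)
  obtain ⟨γ, hγc, hγ0, hγ1, hγU, -, hγd⟩ := hcurve x' hx'U z hzU
  -- intermediate value: find t with dist x (γ t) = r/2
  have hfc : ContinuousOn (fun t => dist x (γ t)) (Set.Icc (0:ℝ) 1) :=
    (continuous_const.dist continuous_id).comp_continuousOn hγc
  have h0 : dist x (γ 0) ≤ r / 2 := by rw [hγ0]; linarith
  have h1 : r / 2 ≤ dist x (γ 1) := by rw [hγ1]; linarith
  have hmem : r / 2 ∈ Set.Icc (dist x (γ 0)) (dist x (γ 1)) := ⟨h0, h1⟩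
  obtain ⟨t, ht, hteq⟩ :=
    intermediate_value_Icc (zero_le_one) hfc hmem
  refine ⟨γ t, hγU t ht, ?_⟩
  have hxy : dist x (γ t) = r / 2 := hteq
  -- lower bound on infDist
  have hmin : r / 3 ≤ min (dist x' (γ t)) (dist z (γ t)) := by
    have h1 : r / 3 ≤ dist x' (γ t) := by
      have := dist_triangle x x' (γ t)
      linarith [hxy, hx'd]
    have h2 : r / 3 ≤ dist z (γ t) := by
      have := dist_triangle x (γ t) z
      rw [dist_comm z (γ t)]
      linarith [hxy, hzr]
    exact le_min h1 h2
  have hinf : r / (3 * A) ≤ Metric.infDist (γ t) Uᶜ := by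
    have := hγd t ht
    have h3 : r / (3 * A) ≤ A⁻¹ * min (dist x' (γ t)) (dist z (γ t)) := by
      have heq : r / (3 * A) = A⁻¹ * (r / 3) := by rw [inv_mul_eq_div, div_div]
      rw [heq]
      exact mul_le_mul_of_nonneg_left hmin (inv_nonneg.mpr hA0.le)
    linarith
  intro p hp
  rw [Metric.mem_ball] at hp
  constructor
  · by_contra hpU
    have : Metric.infDist (γ t) Uᶜ ≤ dist (γ t) p := Metric.infDist_le_dist_of_mem hpU
    rw [dist_comm] at hp
    linarith
  · rw [Metric.mem_ball]
    have htri := dist_triangle p (γ t) x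
    have hle : r / (3 * A) ≤ r / 3 := by
      rw [div_le_div_iff₀ (by positivity) (by norm_num)]
      nlinarith
    rw [dist_comm x (γ t)] at hxy
    linarith
end

section
/- Let m be a doubling measure on a metric space (X,d) and let U ⊊ X be a nonempty uniform domain. Then m(∂U) = 0. -/
/-!
A doubling measure charges every ball, since a null ball would make all its dyadic dilations
null; hence the space is separable and Lebesgue's density theorem holds, even along balls whose
centres move with the radius. The frontier of a uniform domain is porous: by the corkscrew
property, every small ball centred on `∂U` contains a ball of comparable radius inside `U`,
hence disjoint from `∂U`. Along these holes the density of `∂U` is `0` rather than `1`, so `∂U`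
has no density points and is null.
-/
open scoped ENNReal

open Metric MeasureTheory Set Filter Topology Function

section Doubling

variable {X : Type*} [PseudoMetricSpace X] [MeasurableSpace X] {μ : Measure X} {D : ℝ≥0∞}

theorem isOpenPosMeasure_of_doubling (hμ : μ ≠ 0)
    (hdoub : ∀ (x : X) (ρ : ℝ), 0 < ρ → μ (ball x (2 * ρ)) ≤ D * μ (ball x ρ)) :
    μ.IsOpenPosMeasure := by
  refine ⟨fun V hV ⟨x, hx⟩ hV0 => hμ ?_⟩
  obtain ⟨ρ, hρ, hxρ⟩ := Metric.isOpen_iff.1 hV x hx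
  have hnull : ∀ n : ℕ, μ (ball x (2 ^ n * ρ)) = 0 := by
    intro n
    induction n with
    | zero => simpa using measure_mono_null hxρ hV0
    | succ n ih =>
      refine le_antisymm ?_ zero_le
      calc μ (ball x (2 ^ (n + 1) * ρ)) = μ (ball x (2 * (2 ^ n * ρ))) := by ring_nf
        _ ≤ D * μ (ball x (2 ^ n * ρ)) := hdoub x _ (by positivity)
        _ = 0 := by rw [ih, mul_zero]
  have hcover : ⋃ n : ℕ, ball x (2 ^ n * ρ) = univ := by
    refine eq_univ_of_forall fun y => mem_iUnion.2 ?_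
    obtain ⟨n, hn⟩ := pow_unbounded_of_one_lt (dist y x / ρ) one_lt_two
    exact ⟨n, (div_lt_iff₀ hρ).1 hn⟩
  rw [← Measure.measure_univ_eq_zero, ← hcover]
  exact measure_iUnion_null hnull

theorem isUnifLocDoublingMeasure_of_doubling (hD : D ≠ ⊤)
    (hdoub : ∀ (x : X) (ρ : ℝ), 0 < ρ → μ (ball x (2 * ρ)) ≤ D * μ (ball x ρ)) :
    IsUnifLocDoublingMeasure μ := by
  refine ⟨⟨(D ^ 2).toNNReal, eventually_mem_nhdsWithin.mono fun ε (hε : 0 < ε) x => ?_⟩⟩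
  rw [ENNReal.coe_toNNReal (ENNReal.pow_ne_top hD)]
  calc μ (closedBall x (2 * ε)) ≤ μ (ball x (2 * (2 * ε))) :=
        measure_mono (closedBall_subset_ball (by linarith))
    _ ≤ D * (D * μ (ball x ε)) := by
        grw [hdoub x _ (by positivity), hdoub x _ hε]
    _ ≤ D ^ 2 * μ (closedBall x ε) := by
        rw [← mul_assoc, ← sq]
        grw [ball_subset_closedBall]

theorem sigmaFinite_of_measure_ball_lt_top (x₀ : X)
    (hball : ∀ (x : X) (ρ : ℝ), 0 < ρ → μ (ball x ρ) < ⊤) : SigmaFinite μ := by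
  refine Measure.sigmaFinite_of_countable (countable_range fun n : ℕ => ball x₀ (n + 1)) ?_ ?_
  · rintro _ ⟨n, rfl⟩
    exact hball x₀ _ (by positivity)
  · rw [sUnion_range]
    exact iUnion_ball_nat_succ x₀

end Doubling

theorem secondCountableTopology_of_isOpenPosMeasure {X : Type*} [PseudoMetricSpace X]
    [MeasurableSpace X] [OpensMeasurableSpace X] (μ : Measure X) [SFinite μ]
    [μ.IsOpenPosMeasure] : SecondCountableTopology X := by
  refine secondCountable_of_almost_dense_set fun ε hε => ?_
  -- a maximal `ε`-separated set is `ε`-dense, and the disjoint balls of radius `ε / 2` around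
  -- its points all have positive measure
  obtain ⟨N, hN⟩ := zorn_subset {N : Set X | N.Pairwise (ε < dist · ·)} fun c hcS hc =>
    ⟨⋃₀ c, hc.pairwise_sUnion.2 hcS, fun _ => subset_sUnion_of_mem⟩
  refine ⟨N, ?_, fun x => ?_⟩
  · have hdisj : Pairwise (Disjoint on fun y : N => ball (y : X) (ε / 2)) := fun y y' hne =>
      ball_disjoint_ball (by linarith [hN.prop y.2 y'.2 (Subtype.coe_ne_coe.2 hne)])
    have hcount := Measure.countable_meas_pos_of_disjoint_iUnion₀ (μ := μ)
      (fun _ => measurableSet_ball.nullMeasurableSet) fun _ _ h => (hdisj h).aedisjoint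
    simp only [measure_ball_pos μ _ (half_pos hε), ofPred_true, countable_univ_iff] at hcount
    exact countable_coe_iff.1 hcount
  · by_contra! hfar
    have hsep : (insert x N).Pairwise (ε < dist · ·) :=
      pairwise_insert.2 ⟨hN.prop, fun y hy _ => ⟨hfar y hy, dist_comm x y ▸ hfar y hy⟩⟩
    have hxN := hN.2 hsep (subset_insert x N) (mem_insert x N)
    linarith [hfar x hxN, dist_self x]

theorem measure_eq_zero_of_porous {X : Type*} [PseudoMetricSpace X] [MeasurableSpace X]
    [SecondCountableTopology X] [BorelSpace X] (μ : Measure X) [IsLocallyFiniteMeasure μ]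
    [IsUnifLocDoublingMeasure μ] {S : Set X} (K : ℝ)
    (hS : ∀ ξ ∈ S, ∃ᶠ r in 𝓝[>] 0, ∃ z, ξ ∈ closedBall z (K * r) ∧ Disjoint S (closedBall z r)) :
    μ S = 0 := by
  rw [← Measure.restrict_apply_self, measure_eq_zero_iff_ae_notMem]
  filter_upwards [IsUnifLocDoublingMeasure.ae_tendsto_measure_inter_div μ S K] with ξ hξ hξS
  obtain ⟨r, hr, hholes⟩ := exists_seq_forall_of_frequently (hS ξ hξS)
  choose z hξz hdisj using hholes
  have hzero : ∀ n, μ (S ∩ closedBall (z n) (r n)) / μ (closedBall (z n) (r n)) = 0 := fun n => by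
    rw [(hdisj n).inter_eq, measure_empty, ENNReal.zero_div]
  have hlim := hξ z r hr (Eventually.of_forall hξz)
  simp only [hzero] at hlim
  exact zero_ne_one (tendsto_nhds_unique tendsto_const_nhds hlim)

namespace IsUniformDomain

variable {X : Type*} [MetricSpace X] {A : ℝ} {U : Set X}

theorem exists_dist_eq_ball_subset (hU : IsUniformDomain A U) (hA : 0 ≤ A) {x y : X}
    (hx : x ∈ U) (hy : y ∈ U) {s : ℝ} (hs : 0 ≤ s) (hsxy : 2 * s ≤ dist x y) :
    ∃ z, dist x z = s ∧ ball z (A⁻¹ * s) ⊆ U := by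
  obtain ⟨γ, hγc, hγ0, hγ1, -, -, hγU⟩ := hU.2.2.2.2 x hx y hy
  have hdist : ContinuousOn (fun t => dist x (γ t)) (Icc 0 1) :=
    (continuous_const.dist continuous_id).comp_continuousOn hγc
  obtain ⟨t, ht, hxt⟩ := intermediate_value_Icc zero_le_one hdist
    (show s ∈ Icc (dist x (γ 0)) (dist x (γ 1)) by
      rw [hγ0, hγ1, dist_self]; exact ⟨hs, by linarith⟩)
  refine ⟨γ t, hxt, ?_⟩
  have hyt : s ≤ dist y (γ t) := by
    linarith [dist_triangle_right x y (γ t), show dist x (γ t) = s from hxt]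
  calc ball (γ t) (A⁻¹ * s)
      ⊆ ball (γ t) (infDist (γ t) Uᶜ) := by
        refine ball_subset_ball ((mul_le_mul_of_nonneg_left ?_ (inv_nonneg.2 hA)).trans (hγU t ht))
        exact le_min hxt.ge hyt
    _ ⊆ U := by simpa using ball_infDist_subset_compl (s := Uᶜ) (x := γ t)

theorem eventually_closedBall_subset_of_mem_frontier (hU : IsUniformDomain A U) (hA : 0 < A)
    {ξ : X} (hξ : ξ ∈ frontier U) :
    ∀ᶠ r in 𝓝[>] 0, ∃ z, ξ ∈ closedBall z (4 * A * r) ∧ closedBall z r ⊆ U := by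
  obtain ⟨y, hy⟩ := hU.1
  rw [hU.2.2.1.frontier_eq] at hξ
  have hξy : 0 < dist ξ y := dist_pos.2 fun h => hξ.2 (h ▸ hy)
  filter_upwards [Ioo_mem_nhdsGT (div_pos hξy (by positivity : 0 < 6 * A))] with r ⟨hr, hrξ⟩
  -- a curve from a point near `ξ` to `y` passes, at distance `2 A r` from its start, through a
  -- point `z` whose distance to `Uᶜ` is at least `2 r`
  set s := 2 * A * r with hs
  obtain ⟨x, hx, hξx⟩ := mem_closure_iff.1 hξ.1 s (by positivity)
  have h3s : 3 * s ≤ dist ξ y := by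
    rw [lt_div_iff₀ (by positivity)] at hrξ
    linarith
  obtain ⟨z, hxz, hzU⟩ := hU.exists_dist_eq_ball_subset hA.le hx hy (s := s) (by positivity)
    (by linarith [dist_triangle ξ x y])
  refine ⟨z, ?_, (closedBall_subset_ball ?_).trans hzU⟩
  · rw [mem_closedBall]
    linarith [dist_triangle ξ x z, hs]
  · rw [show A⁻¹ * s = 2 * r by rw [hs]; field_simp]
    linarith

end IsUniformDomain

theorem stmt8_general {X : Type*} [MetricSpace X] [MeasurableSpace X] [BorelSpace X]
    (m : MeasureTheory.Measure X) (hm0 : m ≠ 0)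
    (hmball : ∀ (x : X) (ρ : ℝ), 0 < ρ → m (Metric.ball x ρ) < ⊤)
    (D₀ : ℝ≥0∞) (hD₀top : D₀ ≠ ⊤)
    (hdoub : ∀ (x : X) (ρ : ℝ), 0 < ρ →
      m (Metric.ball x (2*ρ)) ≤ D₀ * m (Metric.ball x ρ))
    (A : ℝ) (hA : 1 ≤ A) (U : Set X) (hU : IsUniformDomain A U) :
    m (frontier U) = 0 := by
  obtain ⟨x₀, -⟩ := hU.1
  have : IsLocallyFiniteMeasure m :=
    ⟨fun x => ⟨ball x 1, ball_mem_nhds x one_pos, hmball x 1 one_pos⟩⟩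
  have := sigmaFinite_of_measure_ball_lt_top x₀ hmball
  have := isOpenPosMeasure_of_doubling hm0 hdoub
  have := secondCountableTopology_of_isOpenPosMeasure m
  have := isUnifLocDoublingMeasure_of_doubling hD₀top hdoub
  refine measure_eq_zero_of_porous m (4 * A) fun ξ hξ => ?_
  refine ((hU.eventually_closedBall_subset_of_mem_frontier (by linarith) hξ).mono ?_).frequently
  rintro r ⟨z, hξz, hzU⟩
  rw [hU.2.2.1.frontier_eq]
  exact ⟨z, hξz, disjoint_sdiff_left.mono_right hzU⟩

/-- a doubling measure vanishes on the boundary of a uniform domain. -/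
theorem stmt8 {X : Type*} [MetricSpace X] [MeasurableSpace X] [BorelSpace X]
    (m : MeasureTheory.Measure X) (hm0 : m ≠ 0)
    (hmball : ∀ (x : X) (ρ : ℝ), 0 < ρ → m (Metric.ball x ρ) < ⊤)
    (D₀ : ℝ≥0∞) (hD₀ : 1 ≤ D₀) (hD₀top : D₀ ≠ ⊤)
    (hdoub : ∀ (x : X) (ρ : ℝ), 0 < ρ →
      m (Metric.ball x (2*ρ)) ≤ D₀ * m (Metric.ball x ρ))
    (A : ℝ) (hA : 1 ≤ A) (U : Set X) (hU : IsUniformDomain A U) :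
    m (frontier U) = 0 :=
  stmt8_general m hm0 hmball D₀ hD₀top hdoub A hA U hU
end

section
/- Let Ψ : (0,∞) → (0,∞) be a continuous increasing bijection satisfying C⁻¹ (R/r)^{β₁} ≤ Ψ(R)/Ψ(r) ≤ C (R/r)^{β₂} for all 0 < r ≤ R, with constants 1 < β₁ < β₂ and C > 1. Define Φ(s) = sup_{r>0} (s/r − 1/Ψ(r)). Then there exists a constant C₁ > 0 such that C₁⁻¹ (S/s)^{β₂/(β₂−1)} ≤ Φ(S)/Φ(s) ≤ C₁ (S/s)^{β₁/(β₁−1)} for all 0 < s ≤ S. -/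
/-!
Write `g r = Ψ r / r`; it is power-regular with exponents `β₁ - 1 > 0` and `β₂ - 1`, so it runs
from `0` to `∞` and for each `s > 0` there is `ρ` with `g ρ = 2 / s`. Testing `r = ρ` gives
`Φ s ≥ s / (2ρ)`. Conversely, with `m = (2C)^(1/(β₁-1))`, for `r ≥ ρ / m` the term `s/r - 1/Ψ r` is
at most `m s / ρ`, and for `r ≤ ρ / m` regularity gives `g r ≤ g ρ / 2 = 1 / s`, so the term is
not positive. Thus `Φ s ≍ s / ρ(s)` and `Φ S / Φ s ≍ (S/s) · ρ(s)/ρ(S)`. Finally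
`g (ρ s) = (S/s) g (ρ S)`, and regularity of `g` turns this into
`(S/s)^(1/(β₂-1)) ≲ ρ(s)/ρ(S) ≲ (S/s)^(1/(β₁-1))`.
-/

/-- The Legendre-type transform `Φ(s) = sup_{r>0} (s/r - 1/Ψ(r))` of a scale
function `Ψ`. -/
noncomputable def Phi (Ψ : ℝ → ℝ) (s : ℝ) : ℝ :=
  sSup {t : ℝ | ∃ r > (0:ℝ), t = s / r - 1 / Ψ r}

open Real Set Filter Topology

def IsPowerRegular (C a b : ℝ) (g : ℝ → ℝ) : Prop :=
  ∀ r R : ℝ, 0 < r → r ≤ R → C⁻¹ * (R / r) ^ a ≤ g R / g r ∧ g R / g r ≤ C * (R / r) ^ b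

lemma rpow_inv_le_mul_of_le_mul_rpow {u c v p : ℝ} (hu : 0 ≤ u) (hc : 0 ≤ c) (hv : 0 ≤ v)
    (hp : 0 < p) (h : u ≤ c * v ^ p) : u ^ p⁻¹ ≤ c ^ p⁻¹ * v := by
  rwa [rpow_inv_le_iff_of_pos hu (by positivity) hp, mul_rpow (by positivity) hv,
    rpow_inv_rpow hc hp.ne']

lemma rpow_div_sub_one {t β : ℝ} (ht : 0 < t) (hβ : β ≠ 1) :
    t ^ (β / (β - 1)) = t * t ^ (β - 1)⁻¹ := by
  have : β / (β - 1) = 1 + (β - 1)⁻¹ := by field_simp [sub_ne_zero.2 hβ]; ring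
  rw [this, rpow_add ht, rpow_one]

namespace IsPowerRegular

variable {C a b : ℝ} {g : ℝ → ℝ}

lemma one_le_const (hg : IsPowerRegular C a b g) {r : ℝ} (hr : 0 < r) (hgr : 0 < g r) :
    1 ≤ C := by
  simpa [div_self hr.ne', div_self hgr.ne'] using (hg r r hr le_rfl).2

lemma div_id (hg : IsPowerRegular C a b g) :
    IsPowerRegular C (a - 1) (b - 1) (fun r => g r / r) := by
  intro r R hr hrR
  have ht : 0 < R / r := div_pos (hr.trans_le hrR) hr
  dsimp only
  rw [div_div_div_comm, rpow_sub_one ht.ne', rpow_sub_one ht.ne', ← mul_div_assoc,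
    ← mul_div_assoc]
  exact ⟨div_le_div_of_nonneg_right (hg r R hr hrR).1 ht.le,
    div_le_div_of_nonneg_right (hg r R hr hrR).2 ht.le⟩

lemma tendsto_atTop (hg : IsPowerRegular C a b g) (hpos : ∀ r > 0, 0 < g r) (ha : 0 < a) :
    Tendsto g atTop atTop := by
  have hg1 := hpos 1 one_pos
  have hC : 0 < C⁻¹ := inv_pos.2 (zero_lt_one.trans_le (hg.one_le_const one_pos hg1))
  refine tendsto_atTop_mono' _ ?_ ((tendsto_rpow_atTop ha).const_mul_atTop (mul_pos hC hg1))
  filter_upwards [eventually_ge_atTop 1] with R hR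
  have := (hg 1 R one_pos hR).1
  rw [div_one, le_div_iff₀ hg1] at this
  linarith

lemma tendsto_nhdsGT_zero (hg : IsPowerRegular C a b g) (hpos : ∀ r > 0, 0 < g r)
    (ha : 0 < a) : Tendsto g (𝓝[>] 0) (𝓝 0) := by
  have hg1 := hpos 1 one_pos
  have hC : 0 < C⁻¹ := inv_pos.2 (zero_lt_one.trans_le (hg.one_le_const one_pos hg1))
  have hquot : Tendsto (fun r => g 1 / g r) (𝓝[>] 0) atTop := by
    refine tendsto_atTop_mono' _ ?_
      (((tendsto_rpow_atTop ha).comp tendsto_inv_nhdsGT_zero).const_mul_atTop hC)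
    filter_upwards [self_mem_nhdsWithin, Ioo_mem_nhdsGT one_pos] with r hr hr1
    simpa [one_div] using (hg r 1 hr hr1.2.le).1
  refine ((tendsto_const_nhds (x := g 1)).div_atTop hquot).congr' ?_
  filter_upwards [self_mem_nhdsWithin] with r hr
  exact div_div_cancel₀ hg1.ne'

lemma Ioi_subset_image (hg : IsPowerRegular C a b g) (hpos : ∀ r > 0, 0 < g r)
    (hcont : ContinuousOn g (Ioi 0)) (ha : 0 < a) : Ioi 0 ⊆ g '' Ioi 0 :=
  isPreconnected_Ioi.intermediate_value_Ioi (le_principal_iff.2 self_mem_nhdsWithin)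
    (le_principal_iff.2 (Ioi_mem_atTop 0)) hcont (hg.tendsto_nhdsGT_zero hpos ha)
    (hg.tendsto_atTop hpos ha)

lemma div_le_of_eq_mul (hg : IsPowerRegular C a b g) (hpos : ∀ r > 0, 0 < g r) (ha : 0 < a)
    {x y l : ℝ} (hx : 0 < x) (hy : 0 < y) (hl : 1 ≤ l) (hxy : g x = l * g y) :
    x / y ≤ (C * l) ^ a⁻¹ := by
  have hC := hg.one_le_const hy (hpos y hy)
  rw [le_rpow_inv_iff_of_pos (by positivity) (by positivity) ha]
  rcases le_total y x with hyx | hxy'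
  · have := (hg y x hy hyx).1
    rwa [hxy, mul_div_assoc, div_self (hpos y hy).ne', mul_one,
      inv_mul_le_iff₀ (by positivity)] at this
  · calc (x / y) ^ a ≤ 1 := rpow_le_one (by positivity) (div_le_one_of_le₀ hxy' hy.le) ha.le
      _ ≤ C * l := one_le_mul_of_one_le_of_one_le hC hl

lemma le_div_of_eq_mul (hg : IsPowerRegular C a b g) (hpos : ∀ r > 0, 0 < g r) (ha : 0 < a)
    (hab : a ≤ b) {x y l : ℝ} (hx : 0 < x) (hy : 0 < y) (hl : 1 ≤ l) (hxy : g x = l * g y) :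
    l ^ b⁻¹ ≤ C ^ a⁻¹ * (x / y) := by
  have hC := hg.one_le_const hy (hpos y hy)
  have hl0 : 0 < l := zero_lt_one.trans_le hl
  rcases le_total y x with hyx | hxy'
  · have h := (hg y x hy hyx).2
    rw [hxy, mul_div_assoc, div_self (hpos y hy).ne', mul_one] at h
    calc l ^ b⁻¹ ≤ C ^ b⁻¹ * (x / y) :=
          rpow_inv_le_mul_of_le_mul_rpow hl0.le (by positivity) (by positivity) (ha.trans_le hab) h
      _ ≤ C ^ a⁻¹ * (x / y) := by gcongr
  · have h := (hg x y hx hxy').1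
    rw [hxy, div_mul_cancel_right₀ (hpos y hy).ne', le_inv_comm₀ (by positivity) hl0, mul_inv,
      inv_inv, ← inv_rpow (by positivity), inv_div] at h
    calc l ^ b⁻¹ ≤ l ^ a⁻¹ := rpow_le_rpow_of_exponent_le hl (inv_anti₀ ha hab)
      _ ≤ C ^ a⁻¹ * (x / y) :=
          rpow_inv_le_mul_of_le_mul_rpow hl0.le (by positivity) (by positivity) ha h

end IsPowerRegular

lemma Phi_le {Ψ : ℝ → ℝ} {s M : ℝ} (hM : ∀ r > 0, s / r - 1 / Ψ r ≤ M) : Phi Ψ s ≤ M :=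
  csSup_le ⟨_, 1, one_pos, rfl⟩ (by rintro _ ⟨r, hr, rfl⟩; exact hM r hr)

lemma le_Phi {Ψ : ℝ → ℝ} {s M r : ℝ} (hM : ∀ r > 0, s / r - 1 / Ψ r ≤ M) (hr : 0 < r) :
    s / r - 1 / Ψ r ≤ Phi Ψ s :=
  le_csSup ⟨M, by rintro _ ⟨r, hr, rfl⟩; exact hM r hr⟩ ⟨r, hr, rfl⟩

section LegendreBounds

variable {Ψ : ℝ → ℝ} {C a b s ρ : ℝ}

lemma sub_inv_le_of_div_eq (hΨ : ∀ r > 0, 0 < Ψ r)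
    (hg : IsPowerRegular C a b (fun r => Ψ r / r)) (ha : 0 < a) (hs : 0 < s) (hρ : 0 < ρ)
    (hρs : Ψ ρ / ρ = 2 / s) {r : ℝ} (hr : 0 < r) :
    s / r - 1 / Ψ r ≤ (2 * C) ^ a⁻¹ * (s / ρ) := by
  have hC := hg.one_le_const hρ (div_pos (hΨ ρ hρ) hρ)
  set m := (2 * C) ^ a⁻¹
  have hm : 1 ≤ m := one_le_rpow (by linarith) (inv_nonneg.2 ha.le)
  rcases le_total (ρ / m) r with hρr | hrρ
  · calc s / r - 1 / Ψ r ≤ s / r := sub_le_self _ (one_div_nonneg.2 (hΨ r hr).le)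
      _ ≤ s / (ρ / m) := by gcongr
      _ = m * (s / ρ) := by field_simp
  · have hmρ : m ≤ ρ / r := by rwa [le_div_iff₀ hr, mul_comm, ← le_div_iff₀ (by positivity)]
    have h2C : 2 * C ≤ (ρ / r) ^ a :=
      (rpow_inv_le_iff_of_pos (by linarith) (by positivity) ha).1 hmρ
    have hreg := (hg r ρ hr (hrρ.trans (div_le_self hρ.le hm))).1
    have hsmall : s * Ψ r ≤ r := by
      have h2 : 2 ≤ (Ψ ρ / ρ) / (Ψ r / r) := by
        calc (2 : ℝ) = C⁻¹ * (2 * C) := by field_simp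
          _ ≤ C⁻¹ * (ρ / r) ^ a := by gcongr
          _ ≤ _ := hreg
      rw [hρs, le_div_iff₀ (div_pos (hΨ r hr) hr)] at h2
      field_simp at h2
      linarith
    have hnonpos : s / r ≤ 1 / Ψ r := by rw [div_le_div_iff₀ hr (hΨ r hr)]; linarith
    have hM : 0 ≤ m * (s / ρ) := by positivity
    linarith

lemma Phi_le_of_div_eq (hΨ : ∀ r > 0, 0 < Ψ r)
    (hg : IsPowerRegular C a b (fun r => Ψ r / r)) (ha : 0 < a) (hs : 0 < s) (hρ : 0 < ρ)
    (hρs : Ψ ρ / ρ = 2 / s) : Phi Ψ s ≤ (2 * C) ^ a⁻¹ * (s / ρ) :=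
  Phi_le fun _ hr => sub_inv_le_of_div_eq hΨ hg ha hs hρ hρs hr

lemma le_Phi_of_div_eq (hΨ : ∀ r > 0, 0 < Ψ r)
    (hg : IsPowerRegular C a b (fun r => Ψ r / r)) (ha : 0 < a) (hs : 0 < s) (hρ : 0 < ρ)
    (hρs : Ψ ρ / ρ = 2 / s) : s / (2 * ρ) ≤ Phi Ψ s := by
  have hΨρ : Ψ ρ = 2 * ρ / s := by rw [mul_div_right_comm, ← hρs, div_mul_cancel₀ _ hρ.ne']
  have := le_Phi (fun _ hr => sub_inv_le_of_div_eq hΨ hg ha hs hρ hρs hr) hρ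
  rwa [hΨρ, show s / ρ - 1 / (2 * ρ / s) = s / (2 * ρ) by field_simp; ring] at this

lemma Phi_div_Phi_bounds {S ρs ρS : ℝ} (hΨ : ∀ r > 0, 0 < Ψ r)
    (hg : IsPowerRegular C a b (fun r => Ψ r / r)) (ha : 0 < a) (hs : 0 < s) (hS : 0 < S)
    (hρs : 0 < ρs) (hρS : 0 < ρS) (hs' : Ψ ρs / ρs = 2 / s) (hS' : Ψ ρS / ρS = 2 / S) :
    S / s * (ρs / ρS) / (2 * (2 * C) ^ a⁻¹) ≤ Phi Ψ S / Phi Ψ s ∧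
      Phi Ψ S / Phi Ψ s ≤ 2 * (2 * C) ^ a⁻¹ * (S / s * (ρs / ρS)) := by
  have hΦs := le_Phi_of_div_eq hΨ hg ha hs hρs hs'
  have hΦS := le_Phi_of_div_eq hΨ hg ha hS hρS hS'
  have hC := hg.one_le_const hρs (div_pos (hΨ ρs hρs) hρs)
  have hK : 0 < (2 * C) ^ a⁻¹ := rpow_pos_of_pos (by linarith) _
  constructor
  · calc S / s * (ρs / ρS) / (2 * (2 * C) ^ a⁻¹)
        = S / (2 * ρS) / ((2 * C) ^ a⁻¹ * (s / ρs)) := by field_simp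
      _ ≤ Phi Ψ S / Phi Ψ s :=
          div_le_div₀ ((div_pos hS (by positivity)).le.trans hΦS) hΦS
            ((div_pos hs (by positivity)).trans_le hΦs) (Phi_le_of_div_eq hΨ hg ha hs hρs hs')
  · calc Phi Ψ S / Phi Ψ s ≤ (2 * C) ^ a⁻¹ * (S / ρS) / (s / (2 * ρs)) :=
          div_le_div₀ (mul_pos hK (div_pos hS hρS)).le (Phi_le_of_div_eq hΨ hg ha hS hρS hS')
            (by positivity) hΦs
      _ = 2 * (2 * C) ^ a⁻¹ * (S / s * (ρs / ρS)) := by field_simp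

end LegendreBounds

theorem stmt11_general (Ψ : ℝ → ℝ) (C β₁ β₂ : ℝ) (hβ₁ : 1 < β₁) (hβ : β₁ < β₂)
    (hΨpos : ∀ r > (0:ℝ), 0 < Ψ r)
    (hΨcont : ContinuousOn Ψ (Set.Ioi 0))
    (hreg : ∀ r R : ℝ, 0 < r → r ≤ R →
      C⁻¹ * (R/r)^β₁ ≤ Ψ R / Ψ r ∧ Ψ R / Ψ r ≤ C * (R/r)^β₂) :
    ∃ C₁ > (0:ℝ), ∀ s S : ℝ, 0 < s → s ≤ S →
      C₁⁻¹ * (S/s)^(β₂/(β₂-1)) ≤ Phi Ψ S / Phi Ψ s ∧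
      Phi Ψ S / Phi Ψ s ≤ C₁ * (S/s)^(β₁/(β₁-1)) := by
  have ha : 0 < β₁ - 1 := by linarith
  have hg : IsPowerRegular C (β₁ - 1) (β₂ - 1) (fun r => Ψ r / r) := IsPowerRegular.div_id hreg
  have hgpos : ∀ r > 0, 0 < Ψ r / r := fun r hr => div_pos (hΨpos r hr) hr
  have hC := hg.one_le_const one_pos (hgpos 1 one_pos)
  have hρ : ∀ s > 0, ∃ ρ > 0, Ψ ρ / ρ = 2 / s := fun s hs =>
    hg.Ioi_subset_image hgpos (hΨcont.div continuousOn_id fun r hr => hr.ne') ha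
      (div_pos two_pos hs)
  set K := 2 * (2 * C) ^ (β₁ - 1)⁻¹
  have hK : 0 < K := mul_pos two_pos (rpow_pos_of_pos (by linarith) _)
  refine ⟨K * C ^ (β₁ - 1)⁻¹, mul_pos hK (rpow_pos_of_pos (by linarith) _), ?_⟩
  intro s S hs hsS
  have hS := hs.trans_le hsS
  have hl : 1 ≤ S / s := (one_le_div hs).2 hsS
  obtain ⟨ρs, hρs, hs'⟩ := hρ s hs
  obtain ⟨ρS, hρS, hS'⟩ := hρ S hS
  have hgρ : Ψ ρs / ρs = S / s * (Ψ ρS / ρS) := by rw [hs', hS']; field_simp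
  obtain ⟨hlower, hupper⟩ := Phi_div_Phi_bounds hΨpos hg ha hs hS hρs hρS hs' hS'
  rw [rpow_div_sub_one (by positivity) (by linarith), rpow_div_sub_one (by positivity) hβ₁.ne']
  constructor
  · calc (K * C ^ (β₁ - 1)⁻¹)⁻¹ * (S / s * (S / s) ^ (β₂ - 1)⁻¹)
        ≤ S / s * (C ^ (β₁ - 1)⁻¹ * (ρs / ρS)) / (K * C ^ (β₁ - 1)⁻¹) := by
          rw [inv_mul_eq_div]
          gcongr
          exact hg.le_div_of_eq_mul hgpos ha (by linarith) hρs hρS hl hgρ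
      _ = S / s * (ρs / ρS) / K := by field_simp
      _ ≤ Phi Ψ S / Phi Ψ s := hlower
  · calc Phi Ψ S / Phi Ψ s ≤ K * (S / s * (ρs / ρS)) := hupper
      _ ≤ K * (S / s * (C * (S / s)) ^ (β₁ - 1)⁻¹) := by
          gcongr
          exact hg.div_le_of_eq_mul hgpos ha hρs hρS hl hgρ
      _ = K * C ^ (β₁ - 1)⁻¹ * (S / s * (S / s) ^ (β₁ - 1)⁻¹) := by
          rw [mul_rpow (by linarith) (by positivity)]; ring

/-- two-sided power growth of `Φ`. -/
theorem stmt11 (Ψ : ℝ → ℝ) (C β₁ β₂ : ℝ) (hC : 1 < C) (hβ₁ : 1 < β₁) (hβ : β₁ < β₂)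
    (hΨpos : ∀ r > (0:ℝ), 0 < Ψ r)
    (hΨmono : StrictMonoOn Ψ (Set.Ioi 0))
    (hΨcont : ContinuousOn Ψ (Set.Ioi 0))
    (hΨsurj : ∀ y > (0:ℝ), ∃ r > (0:ℝ), Ψ r = y)
    (hreg : ∀ r R : ℝ, 0 < r → r ≤ R →
      C⁻¹ * (R/r)^β₁ ≤ Ψ R / Ψ r ∧ Ψ R / Ψ r ≤ C * (R/r)^β₂) :
    ∃ C₁ > (0:ℝ), ∀ s S : ℝ, 0 < s → s ≤ S →
      C₁⁻¹ * (S/s)^(β₂/(β₂-1)) ≤ Phi Ψ S / Phi Ψ s ∧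
      Phi Ψ S / Phi Ψ s ≤ C₁ * (S/s)^(β₁/(β₁-1)) :=
  stmt11_general Ψ C β₁ β₂ hβ₁ hβ hΨpos hΨcont hreg
end

section
/- Let Ψ : (0,∞) → (0,∞) be a scale function (a continuous increasing bijection with C⁻¹(R/r)^{β₁} ≤ Ψ(R)/Ψ(r) ≤ C(R/r)^{β₂} for 0 < r ≤ R, 1 < β₁ < β₂, C > 1), and define Φ(s) = sup_{r>0}(s/r − 1/Ψ(r)). Then there exists c ∈ (0,1) such that for all r > 0: Φ(c · r/Ψ(r)) ≤ 1/Ψ(r) ≤ Φ(2r/Ψ(r)). -/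
/-- `Φ(c·r/Ψ(r)) ≤ 1/Ψ(r) ≤ Φ(2r/Ψ(r))` for some `c ∈ (0,1)`. -/
theorem stmt12 (Ψ : ℝ → ℝ) (C β₁ β₂ : ℝ) (hC : 1 < C) (hβ₁ : 1 < β₁) (hβ : β₁ < β₂)
    (hΨpos : ∀ r > (0:ℝ), 0 < Ψ r)
    (hΨmono : StrictMonoOn Ψ (Set.Ioi 0))
    (hΨcont : ContinuousOn Ψ (Set.Ioi 0))
    (hΨsurj : ∀ y > (0:ℝ), ∃ r > (0:ℝ), Ψ r = y)
    (hreg : ∀ r R : ℝ, 0 < r → r ≤ R →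
      C⁻¹ * (R/r)^β₁ ≤ Ψ R / Ψ r ∧ Ψ R / Ψ r ≤ C * (R/r)^β₂) :
    ∃ c : ℝ, 0 < c ∧ c < 1 ∧ ∀ r > (0:ℝ),
      Phi Ψ (c * r / Ψ r) ≤ 1 / Ψ r ∧ 1 / Ψ r ≤ Phi Ψ (2 * r / Ψ r) := by
  have hC0 : (0:ℝ) < C := lt_trans one_pos hC
  -- key consequence of regularity: for `0 < ρ ≤ r`, `(r/ρ)^β₁ / (C·Ψ r) ≤ 1/Ψ ρ`
  have key : ∀ r ρ : ℝ, 0 < ρ → ρ ≤ r → (r/ρ)^β₁ / (C * Ψ r) ≤ 1 / Ψ ρ := by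
    intro r ρ hρ hρr
    have hr : 0 < r := lt_of_lt_of_le hρ hρr
    have hΨρ := hΨpos ρ hρ
    have hΨr := hΨpos r hr
    have h := (hreg ρ r hρ hρr).1
    have ht : (0:ℝ) < (r/ρ)^β₁ := Real.rpow_pos_of_pos (by positivity) _
    rw [div_le_div_iff₀ (by positivity) hΨρ]
    rw [le_div_iff₀ hΨρ] at h
    rw [one_mul]
    calc (r/ρ)^β₁ * Ψ ρ = C * (C⁻¹ * (r/ρ)^β₁ * Ψ ρ) := by
            field_simp
      _ ≤ C * Ψ r := mul_le_mul_of_nonneg_left h hC0.le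
  have hc1 : (2*C)⁻¹ < 1 := by
    rw [inv_lt_one_iff₀]; right; linarith
  refine ⟨(2*C)⁻¹, by positivity, hc1, ?_⟩
  intro r hr
  have hΨr := hΨpos r hr
  constructor
  · -- left inequality
    apply Real.sSup_le _ (by positivity)
    rintro t ⟨ρ, hρ, rfl⟩
    have hΨρ := hΨpos ρ hρ
    have h1ρ : 0 < 1 / Ψ ρ := by positivity
    rcases le_or_gt r ρ with h | h
    · -- ρ ≥ r : s/ρ ≤ 1/Ψ r
      have h2 : (2*C)⁻¹ * r / Ψ r / ρ ≤ 1 / Ψ r := by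
        rw [div_le_div_iff₀ hρ hΨr]
        have e : (2*C)⁻¹ * r / Ψ r * Ψ r = (2*C)⁻¹ * r := div_mul_cancel₀ _ (ne_of_gt hΨr)
        rw [e]
        nlinarith [inv_pos.mpr (by linarith : (0:ℝ) < 2*C)]
      linarith
    · -- ρ < r : s/ρ ≤ 1/Ψ ρ, so the term is ≤ 0
      have hk := key r ρ hρ h.le
      have hx : (1:ℝ) ≤ r/ρ := (one_le_div hρ).mpr h.le
      have hxb : r/ρ ≤ (r/ρ)^β₁ := by
        have := Real.rpow_le_rpow_of_exponent_le hx (le_of_lt hβ₁)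
        rwa [Real.rpow_one] at this
      have h2 : (2*C)⁻¹ * r / Ψ r / ρ ≤ (r/ρ)^β₁ / (C * Ψ r) := by
        rw [div_le_div_iff₀ hρ (by positivity)]
        have e : (2*C)⁻¹ * r / Ψ r * (C * Ψ r) = r/2 := by field_simp
        rw [e]
        have e2 : r/ρ * ρ = r := div_mul_cancel₀ _ (ne_of_gt hρ)
        nlinarith [mul_le_mul_of_nonneg_right hxb hρ.le]
      have : (2*C)⁻¹ * r / Ψ r / ρ - 1/Ψ ρ ≤ 0 := by linarith
      have h3 : (0:ℝ) ≤ 1/Ψ r := by positivity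
      linarith
  · -- right inequality
    have hmem : 1 / Ψ r ∈ {t : ℝ | ∃ ρ > (0:ℝ), t = 2*r/Ψ r/ρ - 1/Ψ ρ} := by
      refine ⟨r, hr, ?_⟩
      field_simp
      ring
    refine le_csSup ?_ hmem
    -- bounded above
    set X := (2*C)^((β₁-1)⁻¹) with hX
    have hX0 : 0 < X := Real.rpow_pos_of_pos (by linarith) _
    refine ⟨(2/Ψ r) * max 1 X, ?_⟩
    rintro t ⟨ρ, hρ, rfl⟩
    have hΨρ := hΨpos ρ hρ
    have h1ρ : 0 < 1 / Ψ ρ := by positivity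
    have hmax1 : (1:ℝ) ≤ max 1 X := le_max_left _ _
    rcases le_or_gt r ρ with h | h
    · -- ρ ≥ r
      have h2 : 2*r/Ψ r/ρ ≤ 2/Ψ r := by
        rw [div_le_div_iff₀ hρ hΨr]
        have e : 2*r/Ψ r * Ψ r = 2*r := div_mul_cancel₀ _ (ne_of_gt hΨr)
        rw [e]; linarith
      have h3 : 2/Ψ r ≤ 2/Ψ r * max 1 X := by
        nlinarith [div_pos (by norm_num : (0:ℝ) < 2) hΨr]
      linarith
    · -- ρ < r
      have hx0 : 0 < r/ρ := by positivity
      have hk := key r ρ hρ h.le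
      have es : 2*r/Ψ r/ρ = 2/Ψ r * (r/ρ) := by field_simp
      rcases le_or_gt (2/Ψ r * (r/ρ)) ((r/ρ)^β₁ / (C * Ψ r)) with hcase | hcase
      · -- dominated by 1/Ψ ρ
        have : 2*r/Ψ r/ρ - 1/Ψ ρ ≤ 0 := by rw [es]; linarith
        have h3 : (0:ℝ) ≤ 2/Ψ r * max 1 X := by positivity
        linarith
      · -- then r/ρ ≤ X
        have hylt : (r/ρ)^β₁ < 2*C*(r/ρ) := by
          rw [div_lt_iff₀ (by positivity)] at hcase
          have e2 : 2/Ψ r * (r/ρ) * (C * Ψ r) = 2*C*(r/ρ) := by field_simp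
          rw [e2] at hcase; linarith
        have hpow : (r/ρ)^(β₁-1) ≤ 2*C := by
          rw [Real.rpow_sub hx0, Real.rpow_one, div_le_iff₀ hx0]
          linarith
        have hxX : r/ρ ≤ X := by
          have hmono := Real.rpow_le_rpow (by positivity) hpow
            (inv_nonneg.mpr (by linarith : (0:ℝ) ≤ β₁-1))
          rwa [← Real.rpow_mul hx0.le, mul_inv_cancel₀ (by linarith : β₁ - 1 ≠ 0),
            Real.rpow_one] at hmono
        have h4 : 2*r/Ψ r/ρ - 1/Ψ ρ ≤ 2/Ψ r * (r/ρ) := by rw [es]; linarith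
        have h5 : 2/Ψ r * (r/ρ) ≤ 2/Ψ r * X := by
          exact mul_le_mul_of_nonneg_left hxX (div_pos two_pos hΨr).le
        have h6 : 2/Ψ r * X ≤ 2/Ψ r * max 1 X := by
          exact mul_le_mul_of_nonneg_left (le_max_right _ _) (div_pos two_pos hΨr).le
        linarith
end

section
/- Let Ψ be a scale function and Φ(s) = sup_{r>0}(s/r − 1/Ψ(r)). Then there exists C₂ ∈ (1,∞) such that C₂⁻¹ ≤ t · Φ(Ψ⁻¹(t)/t) ≤ C₂ for all t > 0. -/
/-- `t · Φ(Ψ⁻¹(t)/t)` is bounded above and below. -/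
theorem stmt13 (Ψ : ℝ → ℝ) (C β₁ β₂ : ℝ) (hC : 1 < C) (hβ₁ : 1 < β₁) (hβ : β₁ < β₂)
    (hΨpos : ∀ r > (0:ℝ), 0 < Ψ r)
    (hΨmono : StrictMonoOn Ψ (Set.Ioi 0))
    (hΨcont : ContinuousOn Ψ (Set.Ioi 0))
    (hΨsurj : ∀ y > (0:ℝ), ∃ r > (0:ℝ), Ψ r = y)
    (hreg : ∀ r R : ℝ, 0 < r → r ≤ R →
      C⁻¹ * (R/r)^β₁ ≤ Ψ R / Ψ r ∧ Ψ R / Ψ r ≤ C * (R/r)^β₂)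
    (ψinv : ℝ → ℝ) (hinv : ∀ t > (0:ℝ), 0 < ψinv t ∧ Ψ (ψinv t) = t) :
    ∃ C₂ : ℝ, 1 < C₂ ∧ ∀ t > (0:ℝ),
      C₂⁻¹ ≤ t * Phi Ψ (ψinv t / t) ∧ t * Phi Ψ (ψinv t / t) ≤ C₂ := by
  have h2C : (1:ℝ) < 2*C := by nlinarith
  have h2C0 : (0:ℝ) ≤ 2*C := by linarith
  have hβ10 : (0:ℝ) < β₁ - 1 := by linarith
  set lam : ℝ := (2*C) ^ ((β₁ - 1)⁻¹) with hlamdef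
  have hlampos : 0 < lam := Real.rpow_pos_of_pos (by linarith) _
  have hlampow : lam ^ (β₁ - 1) = 2*C := by
    rw [hlamdef, ← Real.rpow_mul h2C0, inv_mul_cancel₀ (ne_of_gt hβ10), Real.rpow_one]
  have hlam1 : 1 < lam := by
    by_contra h
    push_neg at h
    have := Real.rpow_le_one (le_of_lt hlampos) h (le_of_lt hβ10)
    rw [hlampow] at this; linarith
  refine ⟨2*lam, by linarith, ?_⟩
  intro t ht
  obtain ⟨hu0, hΨu⟩ := hinv t ht
  set u : ℝ := ψinv t with hudef
  -- the set defining Phi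
  set S : Set ℝ := {x : ℝ | ∃ r > (0:ℝ), x = (u / t) / r - 1 / Ψ r} with hSdef
  have hPhi : Phi Ψ (u / t) = sSup S := rfl
  -- upper bound for every element of S
  have hub : ∀ x ∈ S, x ≤ lam / t := by
    rintro x ⟨r, hr, rfl⟩
    have hΨr := hΨpos r hr
    rcases le_or_gt u r with hru | hru
    · have h1 : (u / t) / r ≤ lam / t := by
        rw [div_div, div_le_div_iff₀ (by positivity) ht]
        nlinarith [mul_le_mul_of_nonneg_left hru (le_of_lt ht),
          mul_nonneg (by linarith : (0:ℝ) ≤ lam - 1) (le_of_lt (mul_pos ht hr))]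
      have h2 : 0 < 1 / Ψ r := by positivity
      linarith
    · -- r < u
      have hx1 : 1 < u / r := (one_lt_div hr).mpr hru
      have hxpos : 0 < u / r := by linarith
      have hA := (hreg r u hr (le_of_lt hru)).1
      rw [hΨu] at hA
      -- hA : C⁻¹ * (u/r)^β₁ ≤ t / Ψ r
      have hAΨ : C⁻¹ * (u/r)^β₁ * Ψ r ≤ t := (le_div_iff₀ hΨr).mp hA
      have hsr : (u / t) / r = (u / r) / t := by
        rw [div_div, div_div, mul_comm]
      rcases le_or_gt (u / r) lam with hcase | hcase
      · have h1 : (u / r) / t ≤ lam / t := by gcongr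
        have h2 : 0 < 1 / Ψ r := by positivity
        rw [hsr]; linarith
      · -- u/r > lam : the term is nonpositive
        have hsplit : (u/r)^β₁ = (u/r) * (u/r)^(β₁ - 1) := by
          rw [show β₁ = 1 + (β₁ - 1) by ring, Real.rpow_add hxpos, Real.rpow_one]
          ring_nf
        have hpow : lam ^ (β₁ - 1) ≤ (u/r) ^ (β₁ - 1) :=
          Real.rpow_le_rpow (le_of_lt hlampos) (le_of_lt hcase) (le_of_lt hβ10)
        rw [hlampow] at hpow
        have hkey : (u / r) ≤ C⁻¹ * (u/r)^β₁ := by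
          rw [hsplit]
          have hC0 : 0 < C := by linarith
          rw [← mul_assoc]
          have : C⁻¹ * (u / r) * (2*C) ≤ C⁻¹ * (u / r) * ((u/r)^(β₁-1)) := by
            apply mul_le_mul_of_nonneg_left hpow (by positivity)
          calc (u/r) ≤ 2 * (u/r) := by linarith
            _ = C⁻¹ * (u/r) * (2*C) := by field_simp
            _ ≤ C⁻¹ * (u / r) * ((u/r)^(β₁-1)) := this
          
        have hle : (u / r) * Ψ r ≤ t := by
          calc (u/r) * Ψ r ≤ C⁻¹ * (u/r)^β₁ * Ψ r := by
                apply mul_le_mul_of_nonneg_right hkey (le_of_lt hΨr)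
            _ ≤ t := hAΨ
        have h3 : (u / r) / t ≤ 1 / Ψ r := by
          rw [div_le_div_iff₀ ht hΨr]
          linarith
        rw [hsr]
        have : lam / t ≥ 0 := by positivity
        linarith
  have hbdd : BddAbove S := ⟨lam / t, hub⟩
  -- the witness element giving the lower bound
  have hmem : ((u / t) / (lam * u) - 1 / Ψ (lam * u)) ∈ S :=
    ⟨lam * u, by positivity, rfl⟩
  have hwit : 1 / (2 * lam * t) ≤ (u / t) / (lam * u) - 1 / Ψ (lam * u) := by
    have hru : u ≤ lam * u := by nlinarith
    have hA := (hreg u (lam * u) hu0 hru).1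
    rw [hΨu] at hA
    have hq : (lam * u) / u = lam := by field_simp
    rw [hq] at hA
    have hlampowβ : lam ^ β₁ = lam * (2*C) := by
      rw [show β₁ = 1 + (β₁ - 1) by ring, Real.rpow_add hlampos, Real.rpow_one, hlampow]
    rw [hlampowβ] at hA
    have hA' : 2 * lam ≤ Ψ (lam * u) / t := by
      have hC0 : 0 < C := by linarith
      have : C⁻¹ * (lam * (2*C)) = 2 * lam := by field_simp
      linarith [this ▸ hA]
    have hΨlu : 2 * lam * t ≤ Ψ (lam * u) := by
      rw [le_div_iff₀ ht] at hA'
      linarith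
    have hΨlupos : 0 < Ψ (lam * u) := hΨpos _ (by positivity)
    have h1 : 1 / Ψ (lam * u) ≤ 1 / (2 * lam * t) := by
      apply one_div_le_one_div_of_le (by positivity) hΨlu
    have h2 : (u / t) / (lam * u) = 1 / (lam * t) := by
      field_simp
    rw [h2]
    have h3 : 1 / (lam * t) - 1 / (2 * lam * t) = 1 / (2 * lam * t) := by
      field_simp; ring
    linarith
  have hsup_lb : 1 / (2 * lam * t) ≤ sSup S :=
    le_trans hwit (le_csSup hbdd hmem)
  have hsup_ub : sSup S ≤ lam / t := Real.sSup_le hub (by positivity)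
  rw [hPhi]
  constructor
  · rw [inv_eq_one_div]
    calc 1 / (2 * lam) = t * (1 / (2 * lam * t)) := by field_simp
      _ ≤ t * sSup S := by
          apply mul_le_mul_of_nonneg_left hsup_lb (le_of_lt ht)
  · calc t * sSup S ≤ t * (lam / t) := by
          apply mul_le_mul_of_nonneg_left hsup_ub (le_of_lt ht)
      _ = lam := by field_simp
      _ ≤ 2 * lam := by linarith
end
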